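/- arXiv:2401.01088 — 3 statements merged into one kernel-verified Lean document; each statement's English description precedes it below -/
import Mathlib

section
/- Let φ : ℝ^d → ℝ be a convex, Lipschitz continuous function with Lipschitz constant Lip(φ), and for α, η > 0 let Σ_{η,α} = {x ∈ ℝ^d : diam(∂φ(B(x,η))) ≥ α}. Then for every R > 0, there exists a finite set Z ⊆ ℝ^d of cardinality at most c_{d,R,η} · Lip(φ)/(α η^{d−1}), with c_{d,R,η} = 48 d² (R+4η)^{d−1}, such that Σ_{η,α} ∩ B(0,R) is covered by the union of the closed balls of radius 8η centered at the points of Z. -/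
/-!
Let `Z` be a maximal `8η`-separated subset of `Σ_{η,α} ∩ B(0,R)`; the balls `B(z,8η)`, `z ∈ Z`,
cover it. Put `Q = R + 4η`. The disjoint balls `B(z,4η)` give `|Z| (4η)^d ≤ Q^d`, which suffices
when `Qα/(Lip(φ) η)` is small. Otherwise let `l = Q/Lip(φ)` and use the multivalued map
`x ↦ x + l ∂φ(x)`: it is onto (minimise `2lφ + ‖· - y‖²`) and, by monotonicity of `∂φ`, its
inverse, the proximal map of `lφ`, is `1`-Lipschitz. For `z ∈ Z` there are subgradients at points
of `B(z,η)` more than `α/2` apart; in their direction `e`, the values of `⟪e, x + l g⟫` over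
`x ∈ B(z,η)`, `g ∈ ∂φ(x)` fill an interval of length `≥ lα/2 - 2η` (connectedness of `B(z,η)`,
closed graph and convex values of `∂φ`), so the image of `B(z,η)` contains `⌊lα/(12η)⌋` points
spaced `6η` apart. The balls of radius `3η` around all these points are disjoint (for different
`z` because the proximal map is `1`-Lipschitz) and lie in `B(0,2Q)`; comparing volumes bounds `|Z|`.
-/

open Metric Set

/-- The subdifferential of `φ` at `x`. -/
def subdiff {d : ℕ} (φ : EuclideanSpace ℝ (Fin d) → ℝ) (x : EuclideanSpace ℝ (Fin d)) :
    Set (EuclideanSpace ℝ (Fin d)) :=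
  {g | ∀ y, φ x + (inner ℝ g (y - x) : ℝ) ≤ φ y}

/-- The image of a set `A` by the subdifferential of `φ`: `∂φ(A) = ⋃_{x ∈ A} ∂φ(x)`. -/
def subdiffSet {d : ℕ} (φ : EuclideanSpace ℝ (Fin d) → ℝ) (A : Set (EuclideanSpace ℝ (Fin d))) :
    Set (EuclideanSpace ℝ (Fin d)) :=
  ⋃ x ∈ A, subdiff φ x

open Filter Topology MeasureTheory Module
open scoped ENNReal NNReal

theorem exists_finset_pairwise_dist_gt_cover {X : Type*} [PseudoMetricSpace X] {A : Set X}
    (hA : TotallyBounded A) {r : ℝ} (hr : 0 < r) :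
    ∃ Z : Finset X, ↑Z ⊆ A ∧ (Z : Set X).Pairwise (fun z z' => r < dist z z') ∧
      A ⊆ ⋃ z ∈ Z, closedBall z r := by
  lift r to ℝ≥0 using hr.le
  obtain ⟨N, -, hNfin, hN⟩ :=
    exists_finite_isCover_of_totallyBounded (ε := r / 2) (half_pos (by exact_mod_cast hr)).ne' hA
  have hpack : packingNumber r A ≠ ⊤ := by
    refine ne_top_of_le_ne_top hNfin.encard_lt_top.ne ?_
    calc packingNumber r A = packingNumber (2 * (r / 2)) A := by rw [mul_div_cancel₀ _ two_ne_zero]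
      _ ≤ externalCoveringNumber (r / 2) A := packingNumber_two_mul_le_externalCoveringNumber _ _
      _ ≤ N.encard := hN.externalCoveringNumber_le_encard
  have hfin : (maximalSeparatedSet r A).Finite := by
    rw [← Set.encard_ne_top_iff, encard_maximalSeparatedSet hpack]
    exact hpack
  refine ⟨hfin.toFinset, by simpa using maximalSeparatedSet_subset, ?_, ?_⟩
  · simpa [IsSeparated, edist_dist] using isSeparated_maximalSeparatedSet (ε := r) (A := A)
  · simpa using (isCover_maximalSeparatedSet hpack).subset_iUnion_closedBall

section Packing

variable {E : Type*} [NormedAddCommGroup E] [NormedSpace ℝ E] [FiniteDimensional ℝ E]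
  [MeasurableSpace E] [BorelSpace E]

theorem card_mul_pow_le_of_pairwiseDisjoint_ball {ι : Type*} {I : Finset ι} {c : ι → E}
    {r S : ℝ} (hr : 0 < r) (hS : 0 < S)
    (hdisj : (I : Set ι).PairwiseDisjoint fun i => ball (c i) r)
    (hsub : ∀ i ∈ I, ball (c i) r ⊆ ball 0 S) :
    (I.card : ℝ) * r ^ finrank ℝ E ≤ S ^ finrank ℝ E := by
  set μ : Measure E := Measure.addHaar
  have key : (I.card : ℝ≥0∞) * ENNReal.ofReal (r ^ finrank ℝ E) * μ (ball 0 1) ≤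
      ENNReal.ofReal (S ^ finrank ℝ E) * μ (ball 0 1) := by
    calc _ = ∑ i ∈ I, μ (ball (c i) r) := by simp [μ.addHaar_ball_of_pos _ hr, mul_assoc]
      _ = μ (⋃ i ∈ I, ball (c i) r) :=
        (measure_biUnion_finset hdisj fun i _ => measurableSet_ball).symm
      _ ≤ μ (ball 0 S) := measure_mono (iUnion₂_subset hsub)
      _ = _ := μ.addHaar_ball_of_pos 0 hS
  rw [ENNReal.mul_le_mul_iff_left (measure_ball_pos μ 0 one_pos).ne' measure_ball_lt_top.ne,
    ← ENNReal.ofReal_natCast, ← ENNReal.ofReal_mul (by positivity)] at key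
  exact (ENNReal.ofReal_le_ofReal_iff (by positivity)).1 key

theorem card_mul_pow_le_of_pairwise_dist_gt {Z : Finset E} {R r : ℝ} (hr : 0 < r) (hR : 0 ≤ R)
    (hZR : ↑Z ⊆ closedBall (0 : E) R) (hZ : (Z : Set E).Pairwise fun z z' => 2 * r < dist z z') :
    (Z.card : ℝ) * r ^ finrank ℝ E ≤ (R + r) ^ finrank ℝ E :=
  card_mul_pow_le_of_pairwiseDisjoint_ball (c := id) hr (by positivity)
    (fun z hz z' hz' hne => ball_disjoint_ball (by simpa [two_mul] using (hZ hz hz' hne).le))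
    (fun z hz => ball_subset_ball' (by simpa [add_comm r] using mem_closedBall.1 (hZR hz)))

end Packing

theorem nonneg_of_forall_nonneg_add_mul {a b : ℝ} (h : ∀ t ∈ Ioc (0 : ℝ) 1, 0 ≤ a + t * b) :
    0 ≤ a := by
  have hlim : Tendsto (fun t => a + t * b) (𝓝[>] 0) (𝓝 a) := by
    have hc : Continuous fun t : ℝ => a + t * b := by fun_prop
    exact (hc.tendsto' 0 a (by simp)).mono_left nhdsWithin_le_nhds
  exact ge_of_tendsto hlim (eventually_of_mem (Ioc_mem_nhdsGT one_pos) h)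

theorem mul_mul_pow_le_of_card_bounds {c x η Q : ℝ} {n : ℕ} (hc : 0 ≤ c) (hη : 0 < η)
    (h₁ : c * (4 * η) ^ n ≤ Q ^ n) (h₂ : c * ⌊x / 12⌋₊ * (3 * η) ^ n ≤ (2 * Q) ^ n) :
    c * x * η ^ n ≤ 24 * Q ^ n := by
  simp only [mul_pow] at h₁ h₂
  have hηn : 0 < η ^ n := by positivity
  rcases lt_or_ge x 24 with hx | hx
  · have h4 : (1 : ℝ) ≤ 4 ^ n := one_le_pow₀ (by norm_num)
    calc c * x * η ^ n ≤ 24 * (c * η ^ n) := by nlinarith [mul_nonneg hc hηn.le]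
      _ ≤ 24 * (c * (4 ^ n * η ^ n)) := by gcongr; exact le_mul_of_one_le_left hηn.le h4
      _ ≤ 24 * Q ^ n := by gcongr
  · set N : ℝ := (⌊x / 12⌋₊ : ℝ)
    have hxN : x ≤ 24 * N := by linarith [Nat.lt_floor_add_one (x / 12)]
    have h23 : (2 : ℝ) ^ n ≤ 3 ^ n := pow_le_pow_left₀ (by norm_num) (by norm_num) n
    have hcN : c * N * η ^ n ≤ Q ^ n := by
      refine le_of_mul_le_mul_left ?_ (by positivity : (0 : ℝ) < 2 ^ n)
      calc 2 ^ n * (c * N * η ^ n) ≤ 3 ^ n * (c * N * η ^ n) := by gcongr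
        _ = c * N * (3 ^ n * η ^ n) := by ring
        _ ≤ 2 ^ n * Q ^ n := h₂
    calc c * x * η ^ n ≤ 24 * (c * N * η ^ n) := by nlinarith [mul_nonneg hc hηn.le]
      _ ≤ 24 * Q ^ n := by gcongr

theorem le_dist_of_inner_eq_add_mul {F : Type*} [NormedAddCommGroup F] [InnerProductSpace ℝ F]
    {e : F} (he : ‖e‖ = 1) {N : ℕ} {w : Fin N → F} {a s : ℝ} (hs : 0 ≤ s)
    (hw : ∀ m, inner ℝ e (w m) = a + s * m) : Pairwise fun i j => s ≤ dist (w i) (w j) := by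
  intro i j hij
  have hij : (1 : ℝ) ≤ |(i : ℝ) - j| := by
    exact_mod_cast Int.one_le_abs (sub_ne_zero.2 (Int.ofNat_inj.not.2 (Fin.val_ne_of_ne hij)))
  calc s ≤ s * |(i : ℝ) - j| := le_mul_of_one_le_right hs hij
    _ = |inner ℝ e (w i - w j)| := by
      rw [inner_sub_right, hw, hw, ← abs_of_nonneg hs, ← abs_mul, abs_of_nonneg hs]
      congr 1
      ring
    _ ≤ dist (w i) (w j) := by
      rw [dist_eq_norm]
      exact (abs_real_inner_le_norm _ _).trans_eq (by rw [he, one_mul])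

section Subdifferential

variable {d : ℕ} {φ : EuclideanSpace ℝ (Fin d) → ℝ} {L : ℝ≥0}
  {x x' g g' : EuclideanSpace ℝ (Fin d)}

local notation "E" => EuclideanSpace ℝ (Fin d)

theorem inner_sub_nonneg_of_mem_subdiff (hg : g ∈ subdiff φ x) (hg' : g' ∈ subdiff φ x') :
    0 ≤ inner ℝ (g - g') (x - x') := by
  have h := hg x'
  have h' := hg' x
  rw [← neg_sub x x', inner_neg_right] at h
  rw [inner_sub_left]
  linarith

theorem norm_le_of_mem_subdiff (hlip : LipschitzWith L φ) (hg : g ∈ subdiff φ x) : ‖g‖ ≤ L := by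
  have h := hg (x + g)
  rw [add_sub_cancel_left, real_inner_self_eq_norm_sq] at h
  have hφ : φ (x + g) - φ x ≤ L * ‖g‖ := by
    simpa [dist_eq_norm] using (le_abs_self _).trans (hlip.dist_le_mul (x + g) x)
  nlinarith [norm_nonneg g]

theorem diam_subdiffSet_le (hlip : LipschitzWith L φ) (A : Set E) :
    diam (subdiffSet φ A) ≤ 2 * L := by
  refine (diam_mono (t := closedBall 0 L) ?_ isBounded_closedBall).trans
    (diam_closedBall L.coe_nonneg)
  simp only [subdiffSet, iUnion₂_subset_iff]
  exact fun x _ g hg => mem_closedBall_zero_iff.2 (norm_le_of_mem_subdiff hlip hg)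

theorem exists_lt_dist_of_lt_diam_subdiffSet {A : Set E} {β : ℝ} (hβ : 0 ≤ β)
    (h : β < diam (subdiffSet φ A)) :
    ∃ x₁ ∈ A, ∃ x₂ ∈ A, ∃ g₁ ∈ subdiff φ x₁, ∃ g₂ ∈ subdiff φ x₂, β < dist g₁ g₂ := by
  by_contra! hcon
  refine h.not_ge (diam_le_of_forall_dist_le hβ fun g₁ hg₁ g₂ hg₂ => ?_)
  simp only [subdiffSet, mem_iUnion₂] at hg₁ hg₂
  obtain ⟨x₁, hx₁, hg₁⟩ := hg₁
  obtain ⟨x₂, hx₂, hg₂⟩ := hg₂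
  exact hcon x₁ hx₁ x₂ hx₂ g₁ hg₁ g₂ hg₂

theorem convex_subdiff : Convex ℝ (subdiff φ x) := by
  intro g hg g' hg' a b ha hb hab y
  rw [inner_add_left, real_inner_smul_left, real_inner_smul_left]
  have hx : φ x = a * φ x + b * φ x := by rw [← add_mul, hab, one_mul]
  have hy : φ y = a * φ y + b * φ y := by rw [← add_mul, hab, one_mul]
  nlinarith [mul_le_mul_of_nonneg_left (hg y) ha, mul_le_mul_of_nonneg_left (hg' y) hb]

theorem isClosed_setOf_mem_subdiff (hφ : Continuous φ) :
    IsClosed {p : E × E | p.2 ∈ subdiff φ p.1} := by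
  have : {p : E × E | p.2 ∈ subdiff φ p.1} =
      ⋂ y, {p | φ p.1 + inner ℝ p.2 (y - p.1) ≤ φ y} := by
    ext
    simp [subdiff]
  rw [this]
  exact isClosed_iInter fun y => isClosed_le (by fun_prop) continuous_const

theorem isClosed_setOf_exists_mem_subdiff (hlip : LipschitzWith L φ) {C : Set (E × E)}
    (hC : IsClosed C) : IsClosed {x | ∃ g ∈ subdiff φ x, (x, g) ∈ C} := by
  refine IsSeqClosed.isClosed fun xs x hxs hlim => ?_
  choose gs hgs hgsC using hxs
  obtain ⟨g, -, σ, hσ, hgσ⟩ := tendsto_subseq_of_bounded (isBounded_closedBall (x := 0) (r := L))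
    fun n => mem_closedBall_zero_iff.2 (norm_le_of_mem_subdiff hlip (hgs n))
  have hpair : Tendsto (fun n => (xs (σ n), gs (σ n))) atTop (𝓝 (x, g)) :=
    (hlim.comp hσ.tendsto_atTop).prodMk_nhds hgσ
  exact ⟨g, (isClosed_setOf_mem_subdiff hlip.continuous).mem_of_tendsto hpair
    (.of_forall fun n => hgs (σ n)), hC.mem_of_tendsto hpair (.of_forall fun n => hgsC (σ n))⟩

theorem norm_sub_le_of_mem_subdiff {l : ℝ} (hl : 0 ≤ l) (hg : g ∈ subdiff φ x)
    (hg' : g' ∈ subdiff φ x') : ‖x - x'‖ ≤ ‖(x + l • g) - (x' + l • g')‖ := by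
  have hmono := inner_sub_nonneg_of_mem_subdiff hg hg'
  have hexp : (x + l • g) - (x' + l • g') = (x - x') + l • (g - g') := by module
  refine le_of_sq_le_sq ?_ (norm_nonneg _)
  rw [hexp, norm_add_sq_real, real_inner_smul_right, norm_smul, real_inner_comm]
  nlinarith [sq_nonneg (‖l‖ * ‖g - g'‖)]

theorem inv_smul_sub_mem_subdiff_of_forall_le (hconv : ConvexOn ℝ univ φ) {l : ℝ} (hl : 0 < l)
    {y : E} (hmin : ∀ u, 2 * l * φ x + ‖x - y‖ ^ 2 ≤ 2 * l * φ u + ‖u - y‖ ^ 2) :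
    l⁻¹ • (y - x) ∈ subdiff φ x := by
  intro u
  set v := u - x
  -- compare with the value of the objective at `x + t • v` and let `t → 0`
  have key : ∀ t ∈ Ioc (0 : ℝ) 1,
      0 ≤ (2 * l * (φ u - φ x) - 2 * inner ℝ (y - x) v) + t * ‖v‖ ^ 2 := by
    rintro t ⟨ht0, ht1⟩
    have hcvx : φ (x + t • v) ≤ φ x + t * (φ u - φ x) := by
      have h := hconv.2 (mem_univ x) (mem_univ u) (sub_nonneg.2 ht1) ht0.le (sub_add_cancel 1 t)
      rw [show (1 - t) • x + t • u = x + t • v by module, smul_eq_mul, smul_eq_mul] at h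
      linarith
    have hsq : ‖x + t • v - y‖ ^ 2 =
        ‖x - y‖ ^ 2 - 2 * t * inner ℝ (y - x) v + t ^ 2 * ‖v‖ ^ 2 := by
      rw [show x + t • v - y = (x - y) + t • v by abel, norm_add_sq_real, real_inner_smul_right,
        norm_smul, mul_pow, Real.norm_eq_abs, sq_abs, ← neg_sub y x, inner_neg_left]
      ring
    have h := hmin (x + t • v)
    rw [hsq] at h
    have : 0 ≤ t * ((2 * l * (φ u - φ x) - 2 * inner ℝ (y - x) v) + t * ‖v‖ ^ 2) := by
      nlinarith
    exact (mul_nonneg_iff_of_pos_left ht0).1 this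
  have h0 := nonneg_of_forall_nonneg_add_mul key
  rw [real_inner_smul_left, ← le_sub_iff_add_le', inv_mul_le_iff₀ hl]
  linarith

theorem exists_forall_le_prox (hlip : LipschitzWith L φ) {l : ℝ} (hl : 0 ≤ l) (y : E) :
    ∃ x, ∀ u, 2 * l * φ x + ‖x - y‖ ^ 2 ≤ 2 * l * φ u + ‖u - y‖ ^ 2 := by
  have hφ := hlip.continuous
  refine Continuous.exists_forall_le (by fun_prop) ?_
  have hnorm : Tendsto (fun u : E => ‖u - y‖) (cocompact E) atTop :=
    tendsto_atTop_mono (fun u => norm_sub_norm_le u y)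
      (tendsto_atTop_add_const_right _ _ tendsto_norm_cocompact_atTop)
  have hpoly : Tendsto (fun r : ℝ => r * (r - 2 * l * L) + 2 * l * φ y) atTop atTop :=
    tendsto_atTop_add_const_right _ _
      (tendsto_id.atTop_mul_atTop₀ (tendsto_atTop_add_const_right _ _ tendsto_id))
  refine tendsto_atTop_mono (fun u => ?_) (hpoly.comp hnorm)
  have hφu : φ y - φ u ≤ L * ‖u - y‖ := by
    simpa [dist_eq_norm] using (neg_le_abs _).trans (hlip.dist_le_mul u y)
  simp only [Function.comp]
  nlinarith [norm_nonneg (u - y)]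

theorem exists_mem_subdiff_add_smul_eq (hconv : ConvexOn ℝ univ φ) (hlip : LipschitzWith L φ)
    {l : ℝ} (hl : 0 < l) (y : E) : ∃ x, ∃ g ∈ subdiff φ x, x + l • g = y := by
  obtain ⟨x, hx⟩ := exists_forall_le_prox hlip hl.le y
  exact ⟨x, _, inv_smul_sub_mem_subdiff_of_forall_le hconv hl hx,
    by rw [smul_inv_smul₀ hl.ne', add_sub_cancel]⟩

theorem subdiff_nonempty (hconv : ConvexOn ℝ univ φ) (hlip : LipschitzWith L φ) (x : E) :
    (subdiff φ x).Nonempty := by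
  have hclosed := isClosed_setOf_exists_mem_subdiff hlip (isClosed_univ (X := E × E))
  have hx : x ∈ closure {x | ∃ g ∈ subdiff φ x, (x, g) ∈ (univ : Set (E × E))} := by
    refine Metric.mem_closure_iff.2 fun ε hε => ?_
    obtain ⟨x', g', hg', hx'⟩ :=
      exists_mem_subdiff_add_smul_eq hconv hlip (l := ε / (L + 1)) (by positivity) x
    refine ⟨x', ⟨g', hg', trivial⟩, ?_⟩
    rw [← hx', dist_eq_norm, add_sub_cancel_left, norm_smul, Real.norm_of_nonneg (by positivity)]
    calc ε / (L + 1) * ‖g'‖ ≤ ε / (L + 1) * L := by gcongr; exact norm_le_of_mem_subdiff hlip hg'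
      _ < ε := by rw [div_mul_eq_mul_div, div_lt_iff₀ (by positivity)]; nlinarith
  obtain ⟨g, hg, -⟩ := hclosed.closure_eq ▸ hx
  exact ⟨g, hg⟩

theorem exists_mem_subdiff_inner_add_smul_eq (hconv : ConvexOn ℝ univ φ)
    (hlip : LipschitzWith L φ) {A : Set E} (hA : IsPreconnected A) (e : E) (l : ℝ)
    {x₁ x₂ g₁ g₂ : E} (hx₁ : x₁ ∈ A) (hx₂ : x₂ ∈ A) (hg₁ : g₁ ∈ subdiff φ x₁)
    (hg₂ : g₂ ∈ subdiff φ x₂) {t : ℝ} (h₁ : inner ℝ e (x₁ + l • g₁) ≤ t)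
    (h₂ : t ≤ inner ℝ e (x₂ + l • g₂)) :
    ∃ x ∈ A, ∃ g ∈ subdiff φ x, inner ℝ e (x + l • g) = t := by
  set f : E × E → ℝ := fun p => inner ℝ e (p.1 + l • p.2)
  have hf : Continuous f := by fun_prop
  obtain ⟨x, hxA, ⟨gle, hgle, hle⟩, ⟨gge, hgge, hge⟩⟩ := isPreconnected_closed_iff.1 hA
    {x | ∃ g ∈ subdiff φ x, (x, g) ∈ {p | f p ≤ t}} {x | ∃ g ∈ subdiff φ x, (x, g) ∈ {p | t ≤ f p}}
    (isClosed_setOf_exists_mem_subdiff hlip (isClosed_le hf continuous_const))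
    (isClosed_setOf_exists_mem_subdiff hlip (isClosed_le continuous_const hf))
    (fun x _ => by
      obtain ⟨g, hg⟩ := subdiff_nonempty hconv hlip x
      exact (le_total (f (x, g)) t).imp (fun h => ⟨g, hg, h⟩) (fun h => ⟨g, hg, h⟩))
    ⟨x₁, hx₁, g₁, hg₁, h₁⟩ ⟨x₂, hx₂, g₂, hg₂, h₂⟩
  obtain ⟨g, hg, hgt⟩ := (convex_segment gle gge).isPreconnected.intermediate_value
    (left_mem_segment ℝ _ _) (right_mem_segment ℝ _ _)
    (hf.comp (Continuous.prodMk_right x)).continuousOn ⟨hle, hge⟩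
  exact ⟨x, hxA, g, convex_subdiff.segment_subset hgle hgge hg, hgt⟩

theorem dist_lt_two_mul_of_mem_ball_add_smul (hconv : ConvexOn ℝ univ φ)
    (hlip : LipschitzWith L φ) {l : ℝ} (hl : 0 < l) (hg : g ∈ subdiff φ x)
    (hg' : g' ∈ subdiff φ x') {y : E} {r : ℝ} (hy : y ∈ ball (x + l • g) r)
    (hy' : y ∈ ball (x' + l • g') r) : dist x x' < 2 * r := by
  obtain ⟨x'', g'', hg'', rfl⟩ := exists_mem_subdiff_add_smul_eq hconv hlip hl y
  have h := norm_sub_le_of_mem_subdiff hl.le hg'' hg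
  have h' := norm_sub_le_of_mem_subdiff hl.le hg'' hg'
  rw [mem_ball, dist_eq_norm] at hy hy'
  calc dist x x' ≤ dist x'' x + dist x'' x' := dist_triangle_left _ _ _
    _ < 2 * r := by rw [dist_eq_norm, dist_eq_norm]; linarith

theorem exists_pairwise_dist_mem_subdiff_add_smul (hconv : ConvexOn ℝ univ φ)
    (hlip : LipschitzWith L φ) {z : E} {η α l : ℝ} (hη : 0 < η) (hα : 0 < α) (hl : 0 < l)
    (hz : α ≤ diam (subdiffSet φ (closedBall z η))) {N : ℕ} (hN : 12 * η * N ≤ l * α) :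
    ∃ w : Fin N → E, (∀ m, ∃ x ∈ closedBall z η, ∃ g ∈ subdiff φ x, w m = x + l • g) ∧
      Pairwise fun i j => 6 * η ≤ dist (w i) (w j) := by
  obtain ⟨x₁, hx₁, x₂, hx₂, g₁, hg₁, g₂, hg₂, hdist⟩ :=
    exists_lt_dist_of_lt_diam_subdiffSet (half_pos hα).le ((half_lt_self hα).trans_le hz)
  set e : E := ‖g₁ - g₂‖⁻¹ • (g₁ - g₂)
  have he : ‖e‖ = 1 :=
    norm_smul_inv_norm (sub_ne_zero.2 (dist_pos.1 ((half_pos hα).trans hdist)))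
  have heg : inner ℝ e (g₁ - g₂) = dist g₁ g₂ := by
    rw [real_inner_smul_left, real_inner_self_eq_norm_sq, dist_eq_norm]
    field_simp
  have hx₁₂ : -(2 * η) ≤ inner ℝ e (x₁ - x₂) := by
    have := (abs_le.1 ((abs_real_inner_le_norm e (x₁ - x₂)).trans_eq (by rw [he, one_mul]))).1
    have hd : ‖x₁ - x₂‖ ≤ 2 * η := by
      rw [← dist_eq_norm, two_mul]
      exact (dist_triangle_right x₁ x₂ z).trans (add_le_add hx₁ hx₂)
    linarith
  have hgap : inner ℝ e (x₂ + l • g₂) + 6 * η * (N - 1) ≤ inner ℝ e (x₁ + l • g₁) := by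
    have : inner ℝ e (x₁ + l • g₁) - inner ℝ e (x₂ + l • g₂) =
        inner ℝ e (x₁ - x₂) + l * dist g₁ g₂ := by
      rw [← heg, ← real_inner_smul_right, ← inner_add_right, ← inner_sub_right]
      congr 1
      module
    nlinarith [mul_lt_mul_of_pos_left hdist hl]
  have hlevel : ∀ m : Fin N, ∃ x ∈ closedBall z η, ∃ g ∈ subdiff φ x,
      inner ℝ e (x + l • g) = inner ℝ e (x₂ + l • g₂) + 6 * η * m := by
    intro m
    refine exists_mem_subdiff_inner_add_smul_eq hconv hlip (convex_closedBall z η).isPreconnected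
      e l hx₂ hx₁ hg₂ hg₁ (le_add_of_nonneg_right (by positivity)) (le_trans ?_ hgap)
    have : (m : ℝ) + 1 ≤ N := by exact_mod_cast m.is_lt
    gcongr
    linarith
  choose x hx g hg hxg using hlevel
  exact ⟨fun m => x m + l • g m, fun m => ⟨x m, hx m, g m, hg m, rfl⟩,
    le_dist_of_inner_eq_add_mul he (by positivity) hxg⟩

theorem card_mul_mul_pow_le_of_le_diam_subdiffSet (hconv : ConvexOn ℝ univ φ)
    (hlip : LipschitzWith L φ) {η α l R : ℝ} (hη : 0 < η) (hα : 0 < α) (hl : 0 < l) (hR : 0 ≤ R)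
    {Z : Finset E}
    (hZR : ↑Z ⊆ closedBall (0 : E) R) (hZ : (Z : Set E).Pairwise fun z z' => 8 * η < dist z z')
    (hZdiam : ∀ z ∈ Z, α ≤ diam (subdiffSet φ (closedBall z η))) {N : ℕ}
    (hN : 12 * η * N ≤ l * α) :
    (Z.card * N : ℝ) * (3 * η) ^ d ≤ (R + 4 * η + l * L) ^ d := by
  choose w hw hwsep using fun z (hz : z ∈ Z) =>
    exists_pairwise_dist_mem_subdiff_add_smul hconv hlip hη hα hl (hZdiam z hz) hN
  have hpack := card_mul_pow_le_of_pairwiseDisjoint_ball (I := Z.attach ×ˢ Finset.univ)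
    (c := fun p : Z × Fin N => w p.1 p.1.2 p.2) (r := 3 * η) (S := R + 4 * η + l * L)
    (by positivity) (by positivity) ?disj ?sub
  · simpa [finrank_euclideanSpace_fin] using hpack
  case disj =>
    rintro ⟨⟨z, hz⟩, i⟩ - ⟨⟨z', hz'⟩, j⟩ - hne
    by_cases hzz : z = z'
    · subst hzz
      have hij : i ≠ j := fun h => hne (by rw [h])
      exact ball_disjoint_ball (by linarith [hwsep z hz hij])
    · refine Set.disjoint_left.2 fun y hy hy' => ?_
      obtain ⟨x, hx, g, hg, hwx⟩ := hw z hz i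
      obtain ⟨x', hx', g', hg', hwx'⟩ := hw z' hz' j
      simp only [hwx, hwx'] at hy hy'
      have hxx' := dist_lt_two_mul_of_mem_ball_add_smul hconv hlip hl hg hg' hy hy'
      have := (dist_triangle4 z x x' z').trans_lt (by
        linarith [mem_closedBall'.1 hx, mem_closedBall.1 hx'] : _ < 8 * η)
      exact (hZ hz hz' hzz).not_gt this
  case sub =>
    rintro ⟨⟨z, hz⟩, i⟩ -
    obtain ⟨x, hx, g, hg, hwx⟩ := hw z hz i
    refine ball_subset_ball' ?_
    have hxR : ‖x‖ ≤ R + η := by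
      have := (dist_triangle x z 0).trans
        (add_le_add (mem_closedBall.1 hx) (mem_closedBall.1 (hZR hz)))
      rw [dist_zero_right] at this
      linarith
    have hgL : ‖l • g‖ ≤ l * L := by
      rw [norm_smul, Real.norm_of_nonneg hl.le]
      exact mul_le_mul_of_nonneg_left (norm_le_of_mem_subdiff hlip hg) hl.le
    simp only [hwx, dist_zero_right]
    linarith [norm_add_le x (l • g)]

end Subdifferential

theorem card_mul_le_of_le_diam_subdiffSet {k : ℕ} {L : ℝ≥0}
    {φ : EuclideanSpace ℝ (Fin (k + 1)) → ℝ} (hconv : ConvexOn ℝ univ φ)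
    (hlip : LipschitzWith L φ) (hL : 0 < (L : ℝ)) {α η R : ℝ} (hα : 0 < α) (hη : 0 < η)
    (hR : 0 ≤ R) {Z : Finset (EuclideanSpace ℝ (Fin (k + 1)))}
    (hZR : ↑Z ⊆ closedBall (0 : EuclideanSpace ℝ (Fin (k + 1))) R)
    (hZ : (Z : Set (EuclideanSpace ℝ (Fin (k + 1)))).Pairwise fun z z' => 8 * η < dist z z')
    (hZdiam : ∀ z ∈ Z, α ≤ diam (subdiffSet φ (closedBall z η))) :
    (Z.card : ℝ) * (α * η ^ k) ≤ 24 * (R + 4 * η) ^ k * L := by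
  set Q := R + 4 * η
  have h₁ := card_mul_pow_le_of_pairwise_dist_gt (r := 4 * η) (by positivity) hR hZR
    (by simpa only [← mul_assoc, show (2 : ℝ) * 4 = 8 by norm_num] using hZ)
  rw [finrank_euclideanSpace_fin] at h₁
  set t := Q / L * α / η
  have h₂ := card_mul_mul_pow_le_of_le_diam_subdiffSet hconv hlip hη hα (l := Q / L)
    (by positivity) hR hZR hZ hZdiam (N := ⌊t / 12⌋₊) (by
      have := Nat.floor_le (by positivity : 0 ≤ t / 12)
      rw [le_div_iff₀ (by norm_num), le_div_iff₀ hη] at this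
      linarith)
  rw [div_mul_cancel₀ _ hL.ne', ← two_mul] at h₂
  have key := mul_mul_pow_le_of_card_bounds (Nat.cast_nonneg _) hη h₁ h₂
  have hlhs : (Z.card : ℝ) * t * η ^ (k + 1) = Z.card * (α * η ^ k) * Q / L := by
    simp only [t]
    field_simp
    ring
  rw [hlhs, div_le_iff₀ hL, pow_succ] at key
  nlinarith [show 0 < Q by positivity]

/-- covering number bound for the near-singularity sets
`Σ_{η,α} = {x : diam(∂φ(B(x,η))) ≥ α}` of a convex Lipschitz function: `Σ_{η,α} ∩ B(0,R)`
can be covered by at most `48 d² (R+4η)^(d-1) Lip(φ)/(α η^(d-1))` closed balls of radius `8η`. -/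
theorem covering_near_singular_set (d : ℕ) (L : NNReal) (φ : EuclideanSpace ℝ (Fin d) → ℝ)
    (hconv : ConvexOn ℝ Set.univ φ) (hlip : LipschitzWith L φ)
    (α η R : ℝ) (hα : 0 < α) (hη : 0 < η) (hR : 0 < R) :
    ∃ Z : Finset (EuclideanSpace ℝ (Fin d)),
      (Z.card : ℝ) ≤ 48 * (d : ℝ) ^ 2 * (R + 4 * η) ^ (d - 1) * (L : ℝ) / (α * η ^ (d - 1)) ∧
      {x : EuclideanSpace ℝ (Fin d) | α ≤ Metric.diam (subdiffSet φ (closedBall x η))} ∩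
          closedBall 0 R ⊆ ⋃ z ∈ Z, closedBall z (8 * η) := by
  obtain ⟨Z, hZA, hZ, hZcov⟩ := exists_finset_pairwise_dist_gt_cover
    ((isCompact_closedBall (0 : EuclideanSpace ℝ (Fin d)) R).totallyBounded.subset
      inter_subset_right) (by positivity : 0 < 8 * η)
  refine ⟨Z, ?_, hZcov⟩
  rcases Z.eq_empty_or_nonempty with rfl | ⟨z, hz⟩
  · simpa using by positivity
  have hzdiam : α ≤ diam (subdiffSet φ (closedBall z η)) := (hZA hz).1
  obtain ⟨k, rfl⟩ : ∃ k, d = k + 1 := Nat.exists_eq_succ_of_ne_zero fun hd => by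
    subst hd
    linarith [diam_subsingleton (subsingleton_of_subsingleton (s := subdiffSet φ (closedBall z η)))]
  have hL : 0 < (L : ℝ) := by linarith [hzdiam.trans (diam_subdiffSet_le hlip _)]
  have hcard := card_mul_le_of_le_diam_subdiffSet hconv hlip hL hα hη hR.le
    (hZA.trans inter_subset_right) hZ fun z hz => (hZA hz).1
  rw [Nat.add_sub_cancel, le_div_iff₀ (by positivity)]
  have hk : (1 : ℝ) ≤ ((k + 1 : ℕ) : ℝ) ^ 2 := one_le_pow₀ (by simp)
  nlinarith [mul_nonneg (pow_nonneg (by positivity : 0 ≤ R + 4 * η) k) hL.le]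
end

section
/- Let φ : ℝ^d → ℝ be a convex function (hence locally Lipschitz and differentiable Lebesgue-almost everywhere). Then for every x ∈ ℝ^d and η > 0, diam(∂φ(B(x,η))) ≤ (12/(β_d η^d)) · ∫_{B(x,4η)} ‖∇φ(u)‖ du, where β_d is the Lebesgue volume of the unit ball of ℝ^d and the integral of the a.e.-defined gradient is with respect to Lebesgue measure. -/
open Metric Set MeasureTheory

/-!
Let `g ∈ ∂φ(y)` with `y ∈ B(x, η)` and let `c = x + 3η g/‖g‖`, so that `B(c, η) ⊆ B(x, 4η)`.
For every `u ∈ B(c, η)` where `φ` is differentiable, `∇φ(u) ∈ ∂φ(u)`, and monotonicity of `∂φ`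
gives `η ‖g‖ ≤ ⟪g, u - y⟫ ≤ ⟪∇φ(u), u - y⟫ ≤ 5η ‖∇φ(u)‖`. By Rademacher's theorem this holds
almost everywhere on `B(c, η)`; integrating, `‖g‖ vol(B(x, η)) ≤ 5 ∫_{B(x,4η)} ‖∇φ‖`, and the
diameter of `∂φ(B(x, η))` is at most twice this bound.
-/

theorem ConvexOn.add_fderiv_le {E : Type*} [NormedAddCommGroup E] [NormedSpace ℝ E]
    {s : Set E} {f : E → ℝ} {f' : E →L[ℝ] ℝ} {x y : E} (hf : ConvexOn ℝ s f) (hx : x ∈ s)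
    (hy : y ∈ s) (hf' : HasFDerivAt f f' x) :
    f x + f' (y - x) ≤ f y := by
  have hline : ConvexOn ℝ (AffineMap.lineMap (k := ℝ) x y ⁻¹' s)
      (f ∘ AffineMap.lineMap (k := ℝ) x y) :=
    hf.comp_affineMap _
  have hderiv : HasDerivAt (f ∘ AffineMap.lineMap (k := ℝ) x y) (f' (y - x)) 0 := by
    refine HasFDerivAt.comp_hasDerivAt _ ?_ AffineMap.hasDerivAt_lineMap
    simpa using hf'
  have := hline.le_slope_of_hasDerivAt (x := 0) (y := 1) (by simpa using hx) (by simpa using hy)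
    zero_lt_one hderiv
  simp only [slope_def_field, Function.comp_apply, AffineMap.lineMap_apply_zero,
    AffineMap.lineMap_apply_one, sub_zero, div_one] at this
  linarith

theorem ConvexOn.gradient_mem_subdiff {d : ℕ} {φ : EuclideanSpace ℝ (Fin d) → ℝ}
    (hφ : ConvexOn ℝ univ φ) {u : EuclideanSpace ℝ (Fin d)} (hu : DifferentiableAt ℝ φ u) :
    gradient φ u ∈ subdiff φ u := fun y ↦
  hφ.add_fderiv_le (mem_univ u) (mem_univ y) (hasGradientAt_iff_hasFDerivAt.mp hu.hasGradientAt)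

theorem inner_le_inner_of_mem_subdiff {d : ℕ} {φ : EuclideanSpace ℝ (Fin d) → ℝ}
    {x y g h : EuclideanSpace ℝ (Fin d)} (hg : g ∈ subdiff φ x) (hh : h ∈ subdiff φ y) :
    inner ℝ g (y - x) ≤ inner ℝ h (y - x) := by
  have := hg y
  have := hh x
  rw [← neg_sub, inner_neg_right] at this
  linarith

theorem norm_gradient_eq_norm_fderiv {E : Type*} [NormedAddCommGroup E] [InnerProductSpace ℝ E]
    [CompleteSpace E] (f : E → ℝ) (x : E) : ‖gradient f x‖ = ‖fderiv ℝ f x‖ :=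
  (InnerProductSpace.toDual ℝ E).symm.norm_map _

section Rademacher

variable {E F : Type*} [NormedAddCommGroup E] [NormedSpace ℝ E] [FiniteDimensional ℝ E]
  [MeasurableSpace E] [BorelSpace E]
  [NormedAddCommGroup F] [NormedSpace ℝ F] [FiniteDimensional ℝ F] {f : E → F} (μ : Measure E)

theorem LocallyLipschitz.ae_differentiableAt [μ.IsAddHaarMeasure]
    (hf : LocallyLipschitz f) : ∀ᵐ x ∂μ, DifferentiableAt ℝ f x := by
  refine measure_null_of_locally_null _ fun x _ ↦ ?_
  obtain ⟨K, t, ht, hK⟩ := hf x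
  refine ⟨{y | ¬DifferentiableAt ℝ f y} ∩ interior t,
    inter_mem_nhdsWithin _ (interior_mem_nhds.mpr ht), ?_⟩
  refine measure_mono_null (fun y ⟨hy, hyt⟩ ↦ ?_) (ae_iff.mp hK.ae_differentiableWithinAt_of_mem)
  exact fun h ↦ hy ((h (interior_subset hyt)).differentiableAt (mem_interior_iff_mem_nhds.mp hyt))

theorem LocallyLipschitz.locallyIntegrable_fderiv [IsLocallyFiniteMeasure μ]
    (hf : LocallyLipschitz f) : LocallyIntegrable (fderiv ℝ f) μ := by
  intro x
  obtain ⟨K, t, ht, hK⟩ := hf x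
  refine (μ.finiteAt_nhds x).integrableAtFilter
    (measurable_fderiv ℝ f).stronglyMeasurable.stronglyMeasurableAtFilter
    (Filter.isBoundedUnder_of_eventually_le (a := (K : ℝ)) ?_)
  filter_upwards [interior_mem_nhds.mpr ht] with y hy
  exact norm_fderiv_le_of_lipschitzOn ℝ (mem_interior_iff_mem_nhds.mp hy) hK

end Rademacher

section Geometry

variable {F : Type*} [NormedAddCommGroup F] [InnerProductSpace ℝ F]

theorem dist_add_div_norm_smul_le (x g : F) (r : ℝ) : dist (x + (r / ‖g‖) • g) x ≤ |r| := by
  rw [dist_eq_norm, add_sub_cancel_left]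
  rcases eq_or_ne g 0 with rfl | hg
  · simp
  · rw [norm_smul, norm_div, norm_norm, div_mul_cancel₀ _ (norm_ne_zero_iff.mpr hg),
      Real.norm_eq_abs]

theorem mul_norm_le_inner_sub {x y u g : F} {r s t : ℝ} (hy : dist y x ≤ t)
    (hu : dist u (x + (r / ‖g‖) • g) ≤ s) :
    (r - s - t) * ‖g‖ ≤ inner ℝ g (u - y) := by
  have hshift : inner ℝ g ((r / ‖g‖) • g) = r * ‖g‖ := by
    rcases eq_or_ne g 0 with rfl | hg
    · simp
    · rw [real_inner_smul_right, real_inner_self_eq_norm_sq]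
      field_simp
  have hlow : ∀ v : F, ∀ a, ‖v‖ ≤ a → -(a * ‖g‖) ≤ inner ℝ g v := fun v a hv ↦
    neg_le_of_abs_le ((abs_real_inner_le_norm g v).trans (by rw [mul_comm]; gcongr))
  have hsplit : u - y = (u - (x + (r / ‖g‖) • g)) + (r / ‖g‖) • g + (x - y) := by abel
  rw [hsplit, inner_add_right, inner_add_right, hshift]
  linarith [hlow _ s (dist_eq_norm u _ ▸ hu), hlow _ t (dist_eq_norm' y x ▸ hy)]

end Geometry

section Subdifferential

variable {d : ℕ} {φ : EuclideanSpace ℝ (Fin d) → ℝ} {x : EuclideanSpace ℝ (Fin d)} {η : ℝ}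

theorem norm_le_five_mul_norm_of_mem_subdiff {y u g h : EuclideanSpace ℝ (Fin d)} (hη : 0 < η)
    (hy : y ∈ closedBall x η) (hg : g ∈ subdiff φ y)
    (hu : u ∈ closedBall (x + (3 * η / ‖g‖) • g) η) (hh : h ∈ subdiff φ u) :
    ‖g‖ ≤ 5 * ‖h‖ := by
  have hshift : dist (x + (3 * η / ‖g‖) • g) x ≤ 3 * η :=
    (dist_add_div_norm_smul_le x g _).trans_eq (abs_of_pos (by positivity))
  have hdist : ‖u - y‖ ≤ 5 * η := by
    rw [← dist_eq_norm]
    calc dist u y ≤ dist u (x + (3 * η / ‖g‖) • g) + dist (x + (3 * η / ‖g‖) • g) x + dist x y :=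
          dist_triangle4 _ _ _ _
      _ ≤ η + 3 * η + η := add_le_add_three hu hshift (dist_comm x y ▸ hy)
      _ = 5 * η := by ring
  have hchain := calc η * ‖g‖ = (3 * η - η - η) * ‖g‖ := by ring
    _ ≤ inner ℝ g (u - y) := mul_norm_le_inner_sub hy hu
    _ ≤ inner ℝ h (u - y) := inner_le_inner_of_mem_subdiff hg hh
    _ ≤ ‖h‖ * ‖u - y‖ := real_inner_le_norm h (u - y)
    _ ≤ ‖h‖ * (5 * η) := by gcongr
  exact le_of_mul_le_mul_left (by linarith) hη

theorem ConvexOn.norm_mul_measureReal_closedBall_le_integral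
    (μ : Measure (EuclideanSpace ℝ (Fin d))) [μ.IsAddHaarMeasure] (hφ : ConvexOn ℝ univ φ)
    (hη : 0 < η) {g : EuclideanSpace ℝ (Fin d)}
    (hg : g ∈ subdiffSet φ (closedBall x η)) :
    ‖g‖ * μ.real (closedBall x η) ≤ 5 * ∫ u in closedBall x (4 * η), ‖gradient φ u‖ ∂μ := by
  obtain ⟨y, hy, hgy⟩ := mem_iUnion₂.mp hg
  set c := x + (3 * η / ‖g‖) • g
  have hsub : closedBall c η ⊆ closedBall x (4 * η) := by
    refine closedBall_subset_closedBall' ?_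
    have := (dist_add_div_norm_smul_le x g (3 * η)).trans_eq (abs_of_pos (by positivity))
    linarith
  have hint : IntegrableOn (fun u ↦ ‖gradient φ u‖) (closedBall x (4 * η)) μ := by
    simp_rw [norm_gradient_eq_norm_fderiv]
    exact ((hφ.locallyLipschitz.locallyIntegrable_fderiv μ).integrableOn_isCompact
      (isCompact_closedBall _ _)).norm
  have hae : ∀ᵐ u ∂μ.restrict (closedBall c η), ‖g‖ ≤ 5 * ‖gradient φ u‖ := by
    filter_upwards [ae_restrict_mem measurableSet_closedBall,
      ae_restrict_of_ae (hφ.locallyLipschitz.ae_differentiableAt μ)] with u hu hdiff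
    exact norm_le_five_mul_norm_of_mem_subdiff hη hy hgy hu (hφ.gradient_mem_subdiff hdiff)
  calc ‖g‖ * μ.real (closedBall x η) = ∫ _ in closedBall c η, ‖g‖ ∂μ := by
        rw [setIntegral_const, smul_eq_mul, mul_comm, measureReal_def, measureReal_def,
          μ.addHaar_closedBall_center, μ.addHaar_closedBall_center c]
    _ ≤ ∫ u in closedBall c η, 5 * ‖gradient φ u‖ ∂μ :=
        setIntegral_mono_ae_restrict (integrableOn_const measure_closedBall_lt_top.ne)
          ((hint.mono_set hsub).const_mul 5) hae
    _ ≤ ∫ u in closedBall x (4 * η), 5 * ‖gradient φ u‖ ∂μ :=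
        setIntegral_mono_set (hint.const_mul 5) (.of_forall fun u ↦ by positivity)
          hsub.eventuallyLE
    _ = 5 * ∫ u in closedBall x (4 * η), ‖gradient φ u‖ ∂μ := integral_const_mul _ _

end Subdifferential

/-- for a convex `φ : ℝ^d → ℝ`, every `x` and `η > 0`,
`diam(∂φ(B(x,η))) ≤ (12/(β_d η^d)) ∫_{B(x,4η)} ‖∇φ(u)‖ du`, where `β_d` is the volume
of the unit ball. -/
theorem diam_subdiff_le_integral_gradient (d : ℕ) (φ : EuclideanSpace ℝ (Fin d) → ℝ)
    (hφ : ConvexOn ℝ Set.univ φ) (x : EuclideanSpace ℝ (Fin d)) (η : ℝ) (hη : 0 < η) :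
    Metric.diam (subdiffSet φ (closedBall x η)) ≤
      12 / ((volume (ball (0 : EuclideanSpace ℝ (Fin d)) 1)).toReal * η ^ d) *
        ∫ u in closedBall x (4 * η), ‖gradient φ u‖ := by
  have hV : (volume (ball (0 : EuclideanSpace ℝ (Fin d)) 1)).toReal * η ^ d =
      volume.real (closedBall x η) := by
    rw [measureReal_def, Measure.addHaar_closedBall _ _ hη.le, ENNReal.toReal_mul,
      ENNReal.toReal_ofReal (by positivity), finrank_euclideanSpace_fin, mul_comm]
  have hVpos : 0 < volume.real (closedBall x η) :=
    ENNReal.toReal_pos (measure_closedBall_pos _ _ hη).ne' measure_closedBall_lt_top.ne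
  rw [hV]
  set I := ∫ u in closedBall x (4 * η), ‖gradient φ u‖
  set V := volume.real (closedBall x η)
  have hI : 0 ≤ I := setIntegral_nonneg measurableSet_closedBall fun u _ ↦ norm_nonneg _
  have hbound : subdiffSet φ (closedBall x η) ⊆ closedBall 0 (5 * I / V) := fun g hg ↦ by
    rw [mem_closedBall_zero_iff, le_div_iff₀ hVpos]
    exact hφ.norm_mul_measureReal_closedBall_le_integral volume hη hg
  calc diam (subdiffSet φ (closedBall x η)) ≤ diam (closedBall 0 (5 * I / V)) :=
        diam_mono hbound isBounded_closedBall
    _ ≤ 2 * (5 * I / V) := diam_closedBall (by positivity)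
    _ ≤ 12 / V * I := by
        rw [div_mul_eq_mul_div, ← mul_div_assoc]
        exact div_le_div_of_nonneg_right (by linarith) hVpos.le
end

section
/- Let p ≥ 2 and R > 0. The function ξ_p(z) = ‖z‖^p is (−p(p−1)R^{p−2})-concave on B(0,R); equivalently, the function z ↦ (p(p−1)R^{p−2}/2)‖z‖² − ‖z‖^p is convex on the closed ball B(0,R). -/
/-!
On `[0, R]` the profile `g t = C/2 t² - t^p` with `C = p(p-1)R^(p-2)` has
`g'' t = C - p(p-1)t^(p-2) ≥ 0` and `g' t = t (C - p t^(p-2)) ≥ 0`, so it is convex and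
nondecreasing there. Composing with the convex function `‖·‖`, which maps `B(0,R)` into `[0,R]`,
gives a convex function on the ball.
-/

open Metric Set Real

theorem ConvexOn.comp_norm_closedBall {E : Type*} [SeminormedAddCommGroup E] [NormedSpace ℝ E]
    {g : ℝ → ℝ} {R : ℝ} (hg : ConvexOn ℝ (Icc 0 R) g) (hg_mono : MonotoneOn g (Icc 0 R)) :
    ConvexOn ℝ (closedBall (0 : E) R) fun z => g ‖z‖ := by
  have hmaps : norm '' closedBall (0 : E) R ⊆ Icc 0 R :=
    image_subset_iff.2 fun z hz => ⟨norm_nonneg z, mem_closedBall_zero_iff.1 hz⟩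
  have himage : Convex ℝ (norm '' closedBall (0 : E) R) :=
    ((convex_closedBall 0 R).isPreconnected.image _ continuous_norm.continuousOn).convex
  exact (hg.subset hmaps himage).comp (convexOn_norm (convex_closedBall 0 R)) (hg_mono.mono hmaps)

section Profile

variable {p C x : ℝ}

theorem continuous_sq_sub_rpow (hp : 0 ≤ p) : Continuous fun t : ℝ => C / 2 * t ^ 2 - t ^ p :=
  (continuous_const.mul (continuous_pow 2)).sub (continuous_rpow_const hp)

theorem hasDerivAt_sq_sub_rpow (hx : 0 < x) :
    HasDerivAt (fun t : ℝ => C / 2 * t ^ 2 - t ^ p) (C * x - p * x ^ (p - 1)) x := by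
  have hsq : HasDerivAt (fun t : ℝ => C / 2 * t ^ 2) (C * x) x := by
    simpa [mul_assoc] using ((hasDerivAt_pow 2 x).const_mul (C / 2)).congr_deriv (by ring)
  exact hsq.sub (hasDerivAt_rpow_const (Or.inl hx.ne'))

theorem hasDerivAt_mul_sub_rpow (hx : 0 < x) :
    HasDerivAt (fun t : ℝ => C * t - p * t ^ (p - 1)) (C - p * (p - 1) * x ^ (p - 2)) x := by
  have hpow := (hasDerivAt_rpow_const (p := p - 1) (Or.inl hx.ne')).const_mul p
  rw [show p - 1 - 1 = p - 2 by ring, ← mul_assoc] at hpow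
  have hlin : HasDerivAt (fun t : ℝ => C * t) C x := by simpa using (hasDerivAt_id x).const_mul C
  exact hlin.sub hpow

variable {R : ℝ}

theorem convexOn_sq_sub_rpow (hp : 2 ≤ p) (hC : p * (p - 1) * R ^ (p - 2) ≤ C) :
    ConvexOn ℝ (Icc 0 R) fun t : ℝ => C / 2 * t ^ 2 - t ^ p := by
  refine convexOn_of_hasDerivWithinAt2_nonneg (convex_Icc 0 R)
    (continuous_sq_sub_rpow (by linarith)).continuousOn
    (fun x hx => (hasDerivAt_sq_sub_rpow (interior_Icc.subset hx).1).hasDerivWithinAt)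
    (fun x hx => (hasDerivAt_mul_sub_rpow (interior_Icc.subset hx).1).hasDerivWithinAt)
    fun x hx => ?_
  rw [interior_Icc] at hx
  have hpow : x ^ (p - 2) ≤ R ^ (p - 2) := rpow_le_rpow hx.1.le hx.2.le (by linarith)
  linarith [mul_le_mul_of_nonneg_left hpow (by nlinarith : 0 ≤ p * (p - 1))]

theorem monotoneOn_sq_sub_rpow (hp : 2 ≤ p) (hC : p * (p - 1) * R ^ (p - 2) ≤ C) :
    MonotoneOn (fun t : ℝ => C / 2 * t ^ 2 - t ^ p) (Icc 0 R) := by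
  refine monotoneOn_of_hasDerivWithinAt_nonneg (convex_Icc 0 R)
    (continuous_sq_sub_rpow (by linarith)).continuousOn
    (fun x hx => (hasDerivAt_sq_sub_rpow (interior_Icc.subset hx).1).hasDerivWithinAt)
    fun x hx => ?_
  rw [interior_Icc] at hx
  have hpow : x ^ (p - 2) ≤ R ^ (p - 2) := rpow_le_rpow hx.1.le hx.2.le (by linarith)
  have hsplit : x ^ (p - 1) = x ^ (p - 2) * x := by
    rw [← rpow_add_one hx.1.ne']; ring_nf
  have hslope : p * x ^ (p - 2) ≤ C :=
    calc p * x ^ (p - 2) ≤ p * R ^ (p - 2) := mul_le_mul_of_nonneg_left hpow (by linarith)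
      _ ≤ p * (p - 1) * R ^ (p - 2) := by
          have hRpow : 0 ≤ R ^ (p - 2) := rpow_nonneg (hx.1.trans hx.2).le _
          nlinarith [mul_nonneg (mul_nonneg (by linarith : 0 ≤ p) (by linarith : 0 ≤ p - 2)) hRpow]
      _ ≤ C := hC
  rw [hsplit]
  linarith [mul_le_mul_of_nonneg_right hslope hx.1.le]

end Profile

theorem pCost_semiconcave_general (d : ℕ) (p R : ℝ) (hp : 2 ≤ p) :
    ConvexOn ℝ (closedBall (0 : EuclideanSpace ℝ (Fin d)) R)
      (fun z : EuclideanSpace ℝ (Fin d) =>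
        p * (p - 1) * R ^ (p - 2) / 2 * ‖z‖ ^ 2 - ‖z‖ ^ p) :=
  (convexOn_sq_sub_rpow hp le_rfl).comp_norm_closedBall (monotoneOn_sq_sub_rpow hp le_rfl)

/-- the p-cost `ξ_p(z) = ‖z‖^p` is `(-p(p-1)R^(p-2))`-concave on `B(0,R)`,
i.e. `z ↦ (p(p-1)R^(p-2)/2)‖z‖² - ‖z‖^p` is convex on the closed ball `B(0,R)`. -/
theorem pCost_semiconcave (d : ℕ) (p R : ℝ) (hp : 2 ≤ p) (hR : 0 < R) :
    ConvexOn ℝ (closedBall (0 : EuclideanSpace ℝ (Fin d)) R)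
      (fun z : EuclideanSpace ℝ (Fin d) =>
        p * (p - 1) * R ^ (p - 2) / 2 * ‖z‖ ^ 2 - ‖z‖ ^ p) :=
  pCost_semiconcave_general d p R hp
end
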